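/- arXiv:2208.04909 — 2 statements merged into one kernel-verified Lean document; each statement's English description precedes it below -/
import Mathlib

section
/- Let j be a positive half-integer, d = 2j+1, λ ∈ ℝ^d a probability vector, and |ψ⟩ = Σ_{k=1}^d √λ_k |k⟩⊗|k⟩ ∈ ℂ^d⊗ℂ^d. Then Var_ψ(j_x⊗𝟙 − 𝟙⊗j_x) + Var_ψ(j_y⊗𝟙 + 𝟙⊗j_y) + Var_ψ(j_z⊗𝟙 − 𝟙⊗j_z) = Σ_{k=1}^{d−1} k(d−k) (√λ_k − √λ_{k+1})², where Var_ψ(T) = ⟨T²⟩_ψ − ⟨T⟩_ψ². -/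
open Matrix Kronecker BigOperators Finset
open scoped ComplexOrder

/-- Expectation value ⟨A⟩_ρ = Re tr(ρ A). -/
noncomputable def expval {n : Type*} [Fintype n] (ρ A : Matrix n n ℂ) : ℝ :=
  ((ρ * A).trace).re

/-- A density matrix: positive semidefinite with unit trace. -/
def IsDensityMatrix {n : Type*} [Fintype n] (ρ : Matrix n n ℂ) : Prop :=
  ρ.PosSemidef ∧ ρ.trace = 1

/-- The projector |v⟩⟨v| associated to a vector. -/
noncomputable def pureState {n : Type*} (v : n → ℂ) : Matrix n n ℂ :=
  Matrix.vecMulVec v (star v)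

/-- A normalized vector. -/
def IsUnitVec {n : Type*} [Fintype n] (v : n → ℂ) : Prop :=
  ∑ i, Complex.normSq (v i) = 1

/-- The canonical Hermitian operator basis of ℂ^d, indexed by pairs (j,k):
diagonal operators for j = k, real operators for j < k, imaginary operators for j > k. -/
noncomputable def canonG (d : ℕ) : Fin d × Fin d → Matrix (Fin d) (Fin d) ℂ := fun μ =>
  if μ.1 = μ.2 then Matrix.single μ.1 μ.1 1
  else if μ.1 < μ.2 then
    ((Real.sqrt 2 : ℂ))⁻¹ • (Matrix.single μ.1 μ.2 1 + Matrix.single μ.2 μ.1 1)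
  else
    (Complex.I * ((Real.sqrt 2 : ℂ))⁻¹) •
      (Matrix.single μ.2 μ.1 1 - Matrix.single μ.1 μ.2 1)

/-- Covariance matrix of a family of observables w.r.t. a state ρ. -/
noncomputable def covMat {n K : Type*} [Fintype n] (ρ : Matrix n n ℂ)
    (M : K → Matrix n n ℂ) : Matrix K K ℝ :=
  Matrix.of fun j k =>
    (1/2 : ℝ) * expval ρ (M j * M k + M k * M j) - expval ρ (M j) * expval ρ (M k)

/-- The local observables (g_μ ⊗ 1, 1 ⊗ g_ν) on the bipartite space. -/
noncomputable def bipObs (d : ℕ) :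
    (Fin d × Fin d) ⊕ (Fin d × Fin d) → Matrix (Fin d × Fin d) (Fin d × Fin d) ℂ :=
  Sum.elim (fun μ => canonG d μ ⊗ₖ (1 : Matrix (Fin d) (Fin d) ℂ))
           (fun ν => (1 : Matrix (Fin d) (Fin d) ℂ) ⊗ₖ canonG d ν)

/-- The full covariance matrix Γ_ρ of the canonical bipartite observables. -/
noncomputable def GammaCM (d : ℕ) (ρ : Matrix (Fin d × Fin d) (Fin d × Fin d) ℂ) :
    Matrix ((Fin d × Fin d) ⊕ (Fin d × Fin d)) ((Fin d × Fin d) ⊕ (Fin d × Fin d)) ℝ :=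
  covMat ρ (bipObs d)

/-- The cross-covariance block X_ρ. -/
noncomputable def crossCov (d : ℕ) (ρ : Matrix (Fin d × Fin d) (Fin d × Fin d) ℂ) :
    Matrix (Fin d × Fin d) (Fin d × Fin d) ℝ :=
  Matrix.of fun μ ν =>
    expval ρ (canonG d μ ⊗ₖ canonG d ν)
      - expval ρ (canonG d μ ⊗ₖ 1) * expval ρ ((1 : Matrix (Fin d) (Fin d) ℂ) ⊗ₖ canonG d ν)

/-- Reduced state on the first subsystem. -/
noncomputable def redA (d : ℕ) (ρ : Matrix (Fin d × Fin d) (Fin d × Fin d) ℂ) :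
    Matrix (Fin d) (Fin d) ℂ :=
  Matrix.of fun i j => ∑ k, ρ (i, k) (j, k)

/-- Reduced state on the second subsystem. -/
noncomputable def redB (d : ℕ) (ρ : Matrix (Fin d × Fin d) (Fin d × Fin d) ℂ) :
    Matrix (Fin d) (Fin d) ℂ :=
  Matrix.of fun i j => ∑ k, ρ (k, i) (k, j)

/-- Purity tr(σ²) (real part). -/
noncomputable def purity {n : Type*} [Fintype n] (σ : Matrix n n ℂ) : ℝ :=
  ((σ * σ).trace).re

/-- Trace norm of a real matrix: sum of its singular values, i.e. tr √(XᵀX). -/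
noncomputable def traceNorm {n : Type*} [Fintype n] [DecidableEq n] (X : Matrix n n ℝ) : ℝ :=
  ((Matrix.posSemidef_conjTranspose_mul_self X).1.eigenvectorUnitary.1 *
    Matrix.diagonal ((RCLike.ofReal : ℝ → ℝ) ∘ (√·) ∘ (Matrix.posSemidef_conjTranspose_mul_self X).1.eigenvalues) *
    (star (Matrix.posSemidef_conjTranspose_mul_self X).1.eigenvectorUnitary : Matrix n n ℝ)).trace

/-- Schmidt rank of a pure state vector is the rank of its coefficient matrix. -/
def SchmidtRankLE (d r : ℕ) (v : Fin d × Fin d → ℂ) : Prop :=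
  (Matrix.of fun j k : Fin d => v (j, k)).rank ≤ r

/-- Schmidt number at most r. -/
def SchmidtNumberLE (d r : ℕ) (ρ : Matrix (Fin d × Fin d) (Fin d × Fin d) ℂ) : Prop :=
  ∃ (n : ℕ) (p : Fin n → ℝ) (ψ : Fin n → (Fin d × Fin d → ℂ)),
    (∀ k, 0 ≤ p k) ∧ (∑ k, p k = 1) ∧ (∀ k, IsUnitVec (ψ k)) ∧
    (∀ k, SchmidtRankLE d r (ψ k)) ∧
    ρ = ∑ k, (p k : ℂ) • pureState (ψ k)

/-- Variance of an observable in a state. -/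
noncomputable def varState {n : Type*} [Fintype n] (σ A : Matrix n n ℂ) : ℝ :=
  expval σ (A * A) - (expval σ A)^2

/-- The magnetic quantum number m_k = k - j - 1 (0-indexed: k - (d-1)/2). -/
noncomputable def spinM (d : ℕ) (k : Fin d) : ℝ := (k : ℝ) - ((d : ℝ) - 1) / 2

/-- The raising operator j₊ for spin j = (d-1)/2. -/
noncomputable def spinPlus (d : ℕ) : Matrix (Fin d) (Fin d) ℂ :=
  Matrix.of fun a b => if (a : ℕ) = (b : ℕ) + 1 then
    (Real.sqrt (((d : ℝ) - 1) / 2 * (((d : ℝ) - 1) / 2 + 1) - spinM d b * (spinM d b + 1)) : ℂ)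
  else 0

/-- The spin operator j_x = (j₊ + j₋)/2. -/
noncomputable def spinX (d : ℕ) : Matrix (Fin d) (Fin d) ℂ :=
  (1 / 2 : ℂ) • (spinPlus d + (spinPlus d)ᴴ)

/-- The spin operator j_y = (j₊ - j₋)/(2i). -/
noncomputable def spinY (d : ℕ) : Matrix (Fin d) (Fin d) ℂ :=
  (-Complex.I / 2) • (spinPlus d - (spinPlus d)ᴴ)

/-- The spin operator j_z. -/
noncomputable def spinZ (d : ℕ) : Matrix (Fin d) (Fin d) ℂ :=
  Matrix.diagonal fun k => (spinM d k : ℂ)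

/-- The quantity Σ_{k=1}^{d-1} k(d-k)(√λ_k - √λ_{k+1})² (0-indexed λ). -/
noncomputable def spinVarSum (d : ℕ) (lam : Fin d → ℝ) : ℝ :=
  ∑ k ∈ Finset.range (d - 1),
    ((k : ℝ) + 1) * ((d : ℝ) - ((k : ℝ) + 1)) *
      (Real.sqrt (if h : k < d then lam ⟨k, h⟩ else 0) -
       Real.sqrt (if h : k + 1 < d then lam ⟨k + 1, h⟩ else 0)) ^ 2

/-- The bound B_{j,r}: infimum of Σ_k k(d-k)(√λ_k - √λ_{k+1})² over probability
vectors λ ∈ ℝ^d with at most r nonzero entries, where d = 2j+1. -/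
noncomputable def Bspin (d r : ℕ) : ℝ :=
  sInf { v : ℝ | ∃ lam : Fin d → ℝ, (∀ k, 0 ≤ lam k) ∧ (∑ k, lam k = 1) ∧
    (Finset.univ.filter fun k => lam k ≠ 0).card ≤ r ∧ v = spinVarSum d lam }

/-!
Writing the Schmidt-form state as `ψ = vec D` with `D = diagonal √λ`, every operator of the form
`X ⊗ 1 - 1 ⊗ Xᵀ` maps `ψ` to `vec (D Xᵀ - Xᵀ D)`, whose `(a, b)` entry is `X a b (√λ_b - √λ_a)`.
This vector is orthogonal to `ψ`, so for Hermitian `X` the variance is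
`∑ |X a b|² (√λ_b - √λ_a)²`. The three collective operators have this form since `j_x` and `j_z`
are symmetric and `j_y` antisymmetric. The diagonal `j_z` contributes nothing, and by the
parallelogram law `|(j_x)_ab|² + |(j_y)_ab|² = (|(j_+)_ab|² + |(j_+)_ba|²) / 2`, which leaves the
sum over the single off-diagonal of `j_+`, where `|(j_+)_{k+1,k}|² = j(j+1) - m_k(m_k+1) = k(d-k)`.
-/

section PureState

variable {n : Type*} [Fintype n]

theorem expval_pureState (v : n → ℂ) (A : Matrix n n ℂ) :
    expval (pureState v) A = (star v ⬝ᵥ A *ᵥ v).re := by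
  rw [expval, pureState, vecMulVec_mul, trace_vecMulVec, dotProduct_comm, ← dotProduct_mulVec]

theorem expval_pureState_mul_self {A : Matrix n n ℂ} (hA : A.IsHermitian) (v : n → ℂ) :
    expval (pureState v) (A * A) = (star (A *ᵥ v) ⬝ᵥ A *ᵥ v).re := by
  rw [expval_pureState, ← mulVec_mulVec, dotProduct_mulVec, star_mulVec, hA.eq]

theorem varState_pureState_eq_zero_of_mulVec_eq_zero {A : Matrix n n ℂ} {v : n → ℂ}
    (hAv : A *ᵥ v = 0) : varState (pureState v) A = 0 := by
  rw [varState, expval_pureState, expval_pureState, ← mulVec_mulVec, hAv, mulVec_zero,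
    dotProduct_zero, Complex.zero_re, zero_pow two_ne_zero, sub_zero]

end PureState

theorem Matrix.IsHermitian.kronecker {R m p : Type*} [CommMagma R] [StarMul R]
    {X : Matrix m m R} {Y : Matrix p p R} (hX : X.IsHermitian) (hY : Y.IsHermitian) :
    (X ⊗ₖ Y).IsHermitian := by
  rw [IsHermitian, conjTranspose_kronecker, hX.eq, hY.eq]

section SchmidtForm

variable {n : Type*} [DecidableEq n]

theorem vec_diagonal {R : Type*} [Zero R] (v : n → R) :
    vec (diagonal v) = fun p => if p.1 = p.2 then v p.1 else 0 := by
  ext ⟨a, b⟩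
  simp only [vec, diagonal_apply, eq_comm]
  split_ifs with hab
  · rw [hab]
  · rfl

variable [Fintype n]

theorem kronecker_one_sub_one_kronecker_transpose_mulVec_vec_diagonal {R : Type*} [CommRing R]
    (X : Matrix n n R) (v : n → R) :
    (X ⊗ₖ (1 : Matrix n n R) - 1 ⊗ₖ Xᵀ) *ᵥ vec (diagonal v)
      = vec (diagonal v * Xᵀ - Xᵀ * diagonal v) := by
  rw [sub_mulVec, kronecker_mulVec_vec, kronecker_mulVec_vec, vec_sub, Matrix.one_mul,
    transpose_one, Matrix.mul_one]

theorem diagonal_kronecker_one_sub_one_kronecker_diagonal_mulVec_vec_diagonal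
    {R : Type*} [CommRing R] (m v : n → R) :
    (diagonal m ⊗ₖ (1 : Matrix n n R) - 1 ⊗ₖ diagonal m) *ᵥ vec (diagonal v) = 0 := by
  nth_rw 2 [← diagonal_transpose m]
  rw [kronecker_one_sub_one_kronecker_transpose_mulVec_vec_diagonal, diagonal_transpose,
    diagonal_mul_diagonal, diagonal_mul_diagonal]
  simp_rw [mul_comm, sub_self, vec_zero]

theorem star_vec_diagonal_dotProduct_vec_commutator_eq_zero {R : Type*} [CommRing R]
    [StarRing R] (X : Matrix n n R) (v : n → R) :
    star (vec (diagonal v)) ⬝ᵥ vec (diagonal v * X - X * diagonal v) = 0 := by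
  have hcomm : (diagonal v)ᴴ * diagonal v = diagonal v * (diagonal v)ᴴ := by
    rw [diagonal_conjTranspose, diagonal_mul_diagonal, diagonal_mul_diagonal]
    simp_rw [mul_comm]
  rw [star_vec_dotProduct_vec, Matrix.mul_sub, trace_sub, ← Matrix.mul_assoc, hcomm,
    ← trace_mul_cycle, Matrix.mul_assoc, sub_self]

theorem varState_pureState_vec_diagonal {X : Matrix n n ℂ} (hX : X.IsHermitian) (v : n → ℂ) :
    varState (pureState (vec (diagonal v))) (X ⊗ₖ (1 : Matrix n n ℂ) - 1 ⊗ₖ Xᵀ)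
      = ∑ a, ∑ b, Complex.normSq (X a b) * Complex.normSq (v b - v a) := by
  have hA : (X ⊗ₖ (1 : Matrix n n ℂ) - 1 ⊗ₖ Xᵀ).IsHermitian :=
    (hX.kronecker isHermitian_one).sub (isHermitian_one.kronecker hX.transpose)
  rw [varState, expval_pureState_mul_self hA, expval_pureState,
    kronecker_one_sub_one_kronecker_transpose_mulVec_vec_diagonal,
    star_vec_diagonal_dotProduct_vec_commutator_eq_zero, dotProduct, Fintype.sum_prod_type]
  simp only [vec, Pi.star_apply, Matrix.sub_apply, diagonal_mul, mul_diagonal, transpose_apply,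
    Complex.zero_re, Complex.re_sum]
  rw [zero_pow two_ne_zero, sub_zero]
  refine sum_congr rfl fun a _ => sum_congr rfl fun b _ => ?_
  rw [show v b * X a b - X a b * v a = X a b * (v b - v a) by ring, Complex.star_def,
    ← Complex.normSq_eq_conj_mul_self, Complex.ofReal_re, Complex.normSq_mul]

end SchmidtForm

theorem sum_sum_ite_val_eq_add_one (d : ℕ) (f : ℕ → ℕ → ℝ) :
    ∑ a : Fin d, ∑ b : Fin d, (if (a : ℕ) = b + 1 then f a b else 0)
      = ∑ k ∈ range (d - 1), f (k + 1) k := by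
  rw [Finset.sum_comm]
  have hinner : ∀ b : ℕ, ∑ a : Fin d, (if (a : ℕ) = b + 1 then f a b else 0)
      = if b + 1 < d then f (b + 1) b else 0 := fun b => by
    rw [Fin.sum_univ_eq_sum_range (fun a => if a = b + 1 then f a b else 0), sum_ite_eq']
    simp only [mem_range]
  simp_rw [hinner]
  rw [Fin.sum_univ_eq_sum_range (fun b => if b + 1 < d then f (b + 1) b else 0), ← sum_filter]
  congr 1
  ext k
  simp only [mem_filter, mem_range]
  omega

theorem normSq_half_add_add_normSq_neg_I_half_sub (p q : ℂ) :
    Complex.normSq ((1 / 2) * (p + q)) + Complex.normSq ((-Complex.I / 2) * (p - q))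
      = (Complex.normSq p + Complex.normSq q) / 2 := by
  simp only [Complex.normSq_mul, Complex.normSq_add, Complex.normSq_sub, Complex.normSq_div,
    Complex.normSq_neg, Complex.normSq_I, Complex.normSq_one, Complex.normSq_ofNat]
  ring

section Spin

variable (d : ℕ)

theorem spinPlus_conjTranspose : (spinPlus d)ᴴ = (spinPlus d)ᵀ := by
  ext a b
  simp only [conjTranspose_apply, transpose_apply, spinPlus, of_apply]
  split_ifs <;> simp [Complex.conj_ofReal]

theorem spinX_transpose : (spinX d)ᵀ = spinX d := by
  rw [spinX, spinPlus_conjTranspose, transpose_smul, transpose_add, transpose_transpose, add_comm]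

theorem spinY_transpose : (spinY d)ᵀ = -spinY d := by
  rw [spinY, spinPlus_conjTranspose, transpose_smul, transpose_sub, transpose_transpose,
    ← smul_neg, neg_sub]

theorem isHermitian_spinX : (spinX d).IsHermitian := by
  rw [IsHermitian, spinX, conjTranspose_smul, conjTranspose_add, conjTranspose_conjTranspose,
    add_comm]
  norm_num

theorem isHermitian_spinY : (spinY d).IsHermitian := by
  rw [IsHermitian, spinY, conjTranspose_smul, conjTranspose_sub, conjTranspose_conjTranspose,
    ← neg_sub, smul_neg, ← neg_smul]
  simp [Complex.conj_I, neg_div]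

theorem spinY_kronecker_one_add_one_kronecker_spinY :
    spinY d ⊗ₖ (1 : Matrix (Fin d) (Fin d) ℂ) + 1 ⊗ₖ spinY d
      = spinY d ⊗ₖ 1 - 1 ⊗ₖ (spinY d)ᵀ := by
  rw [spinY_transpose]
  ext
  simp [sub_eq_add_neg]

theorem normSq_spinPlus_apply (a b : Fin d) :
    Complex.normSq (spinPlus d a b)
      = if (a : ℕ) = b + 1 then ((b : ℝ) + 1) * ((d : ℝ) - ((b : ℝ) + 1)) else 0 := by
  simp only [spinPlus, of_apply, spinM]
  split_ifs with h
  · have hb : (b : ℝ) + 1 + 1 ≤ d := by exact_mod_cast h ▸ a.isLt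
    rw [Complex.normSq_ofReal, Real.mul_self_sqrt (by nlinarith)]
    ring
  · exact map_zero _

theorem normSq_spinX_apply_add_normSq_spinY_apply (a b : Fin d) :
    Complex.normSq (spinX d a b) + Complex.normSq (spinY d a b)
      = (Complex.normSq (spinPlus d a b) + Complex.normSq (spinPlus d b a)) / 2 := by
  simp only [spinX, spinY, Matrix.smul_apply, Matrix.add_apply, Matrix.sub_apply,
    conjTranspose_apply, smul_eq_mul, normSq_half_add_add_normSq_neg_I_half_sub,
    Complex.star_def, Complex.normSq_conj]

theorem sum_normSq_spinX_add_sum_normSq_spinY (w : Fin d → Fin d → ℝ)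
    (hw : ∀ a b, w a b = w b a) :
    ∑ a, ∑ b, Complex.normSq (spinX d a b) * w a b
        + ∑ a, ∑ b, Complex.normSq (spinY d a b) * w a b
      = ∑ a, ∑ b, Complex.normSq (spinPlus d a b) * w a b := by
  have hswap : ∑ a, ∑ b, Complex.normSq (spinPlus d b a) * w a b
      = ∑ a, ∑ b, Complex.normSq (spinPlus d a b) * w a b := by
    rw [Finset.sum_comm]
    exact sum_congr rfl fun a _ => sum_congr rfl fun b _ => by rw [hw]
  calc ∑ a, ∑ b, Complex.normSq (spinX d a b) * w a b
        + ∑ a, ∑ b, Complex.normSq (spinY d a b) * w a b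
      = (∑ a, ∑ b, Complex.normSq (spinPlus d a b) * w a b
        + ∑ a, ∑ b, Complex.normSq (spinPlus d b a) * w a b) / 2 := by
        simp only [← sum_add_distrib, sum_div, ← add_mul,
          normSq_spinX_apply_add_normSq_spinY_apply, div_mul_eq_mul_div]
    _ = ∑ a, ∑ b, Complex.normSq (spinPlus d a b) * w a b := by rw [hswap, add_self_div_two]

theorem sum_normSq_spinPlus_mul (s : ℕ → ℝ) :
    ∑ a : Fin d, ∑ b : Fin d, Complex.normSq (spinPlus d a b) * (s b - s a) ^ 2
      = ∑ k ∈ range (d - 1), ((k : ℝ) + 1) * ((d : ℝ) - ((k : ℝ) + 1)) * (s k - s (k + 1)) ^ 2 := by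
  simp_rw [normSq_spinPlus_apply, ite_mul, zero_mul]
  rw [← sum_sum_ite_val_eq_add_one d
    fun a b => ((b : ℝ) + 1) * ((d : ℝ) - ((b : ℝ) + 1)) * (s b - s a) ^ 2]

end Spin

theorem collective_spin_variance_of_schmidt_form_state_general
    (d : ℕ) (lam : Fin d → ℝ)
    (ψ : Fin d × Fin d → ℂ)
    (hψ : ψ = fun p => if p.1 = p.2 then (Real.sqrt (lam p.1) : ℂ) else 0) :
    varState (pureState ψ) (spinX d ⊗ₖ (1 : Matrix (Fin d) (Fin d) ℂ) - 1 ⊗ₖ spinX d) +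
    varState (pureState ψ) (spinY d ⊗ₖ (1 : Matrix (Fin d) (Fin d) ℂ) + 1 ⊗ₖ spinY d) +
    varState (pureState ψ) (spinZ d ⊗ₖ (1 : Matrix (Fin d) (Fin d) ℂ) - 1 ⊗ₖ spinZ d) =
      spinVarSum d lam := by
  set v : Fin d → ℂ := fun k => (√(lam k) : ℂ)
  have hψ_vec : ψ = vec (diagonal v) := hψ.trans (vec_diagonal v).symm
  have hvarX := varState_pureState_vec_diagonal (isHermitian_spinX d) v
  rw [spinX_transpose] at hvarX
  have hvarZ : varState (pureState ψ) (spinZ d ⊗ₖ 1 - 1 ⊗ₖ spinZ d) = 0 :=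
    varState_pureState_eq_zero_of_mulVec_eq_zero <| hψ_vec ▸
      diagonal_kronecker_one_sub_one_kronecker_diagonal_mulVec_vec_diagonal _ v
  rw [hvarZ, add_zero, hψ_vec, spinY_kronecker_one_add_one_kronecker_spinY, hvarX,
    varState_pureState_vec_diagonal (isHermitian_spinY d),
    sum_normSq_spinX_add_sum_normSq_spinY _ _ fun a b => by rw [← Complex.normSq_neg, neg_sub]]
  set s : ℕ → ℝ := fun k => √(if h : k < d then lam ⟨k, h⟩ else 0)
  have hw : ∀ a b : Fin d, Complex.normSq (v b - v a) = (s b - s a) ^ 2 := fun a b => by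
    simp only [v, s, Fin.is_lt, dite_true, ← Complex.ofReal_sub, Complex.normSq_ofReal, sq]
  simp_rw [hw]
  exact sum_normSq_spinPlus_mul d s

/-- For |ψ⟩ = Σ_k √λ_k |kk⟩ with j = (d-1)/2, the sum of variances of the
collective spin operators j_x⊗1 - 1⊗j_x, j_y⊗1 + 1⊗j_y, j_z⊗1 - 1⊗j_z equals
Σ_{k=1}^{d-1} k(d-k)(√λ_k - √λ_{k+1})². -/
theorem collective_spin_variance_of_schmidt_form_state
    (d : ℕ) (hd : 2 ≤ d) (lam : Fin d → ℝ)
    (hpos : ∀ k, 0 ≤ lam k) (hsum : ∑ k, lam k = 1)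
    (ψ : Fin d × Fin d → ℂ)
    (hψ : ψ = fun p => if p.1 = p.2 then (Real.sqrt (lam p.1) : ℂ) else 0) :
    varState (pureState ψ) (spinX d ⊗ₖ (1 : Matrix (Fin d) (Fin d) ℂ) - 1 ⊗ₖ spinX d) +
    varState (pureState ψ) (spinY d ⊗ₖ (1 : Matrix (Fin d) (Fin d) ℂ) + 1 ⊗ₖ spinY d) +
    varState (pureState ψ) (spinZ d ⊗ₖ (1 : Matrix (Fin d) (Fin d) ℂ) - 1 ⊗ₖ spinZ d) =
      spinVarSum d lam :=
  collective_spin_variance_of_schmidt_form_state_general d lam ψ hψ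
end

section
/- Let j be a positive half-integer, d = 2j+1, and 1 ≤ r < d. Then B_{j,r} ≥ 2j/r². -/
open Matrix Kronecker BigOperators Finset
open scoped ComplexOrder

/-!
Some entry `λ_m` is at least `1/r`. Since at most `r < d` entries are nonzero, every window of
`r + 1` consecutive indices contains a zero entry, so `λ_z = 0` for some `z` with `|z - m| ≤ r`.
Telescoping `√λ` between `z` and `m` and applying Cauchy–Schwarz gives
`λ_m ≤ r ∑ₖ (√λ_k - √λ_{k+1})²`, and every weight `k(d - k)` with `1 ≤ k ≤ d - 1` is at least
`d - 1`.
-/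
lemma exists_inv_le_of_sum_eq_one {ι : Type*} [Fintype ι] {f : ι → ℝ} {r : ℕ}
    (hsum : ∑ i, f i = 1) (hcard : #(univ.filter fun i => f i ≠ 0) ≤ r) :
    ∃ i, (r : ℝ)⁻¹ ≤ f i := by
  set T := univ.filter fun i => f i ≠ 0
  have hT : ∑ i ∈ T, f i = 1 := by rw [sum_filter_ne_zero, hsum]
  have hne : T.Nonempty := nonempty_of_sum_ne_zero (by rw [hT]; exact one_ne_zero)
  obtain ⟨i, -, hi⟩ := exists_le_of_sum_le hne (f := fun _ => (r : ℝ)⁻¹) (g := f) (by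
    rw [sum_const, nsmul_eq_mul, hT, ← div_eq_mul_inv]
    exact div_le_one_of_le₀ (by exact_mod_cast hcard) r.cast_nonneg)
  exact ⟨i, hi⟩

lemma exists_eq_zero_near {d r : ℕ} {f : Fin d → ℝ} (hrd : r < d)
    (hcard : #(univ.filter fun i => f i ≠ 0) ≤ r) (m : Fin d) :
    ∃ z : Fin d, f z = 0 ∧ (z : ℕ) ≤ m + r ∧ (m : ℕ) ≤ z + r := by
  let a := min (m : ℕ) (d - 1 - r)
  let W := Icc (⟨a, by omega⟩ : Fin d) ⟨a + r, by omega⟩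
  have hW : #(univ.filter fun i => f i ≠ 0) < #W := by simp only [W, Fin.card_Icc]; omega
  obtain ⟨z, hzW, hz⟩ := exists_mem_notMem_of_card_lt_card hW
  simp only [mem_filter, mem_univ, true_and, not_not] at hz
  simp only [W, mem_Icc, Fin.le_def] at hzW
  exact ⟨z, hz, by omega, by omega⟩

lemma sq_sub_le_mul_sum_sq_sub (s : ℕ → ℝ) {p q : ℕ} (hpq : p ≤ q) :
    (s p - s q) ^ 2 ≤ (q - p : ℕ) * ∑ k ∈ Ico p q, (s k - s (k + 1)) ^ 2 := by
  have htel : ∑ k ∈ Ico p q, (s k - s (k + 1)) = s p - s q := by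
    simpa only [neg_sub_neg, sub_neg_eq_add, neg_add_eq_sub] using sum_Ico_sub (fun k => -s k) hpq
  rw [← htel, ← Nat.card_Ico p q]
  exact sq_sum_le_card_mul_sum_sq

lemma sub_one_le_mul_sub {x d : ℝ} (h1 : 1 ≤ x) (h2 : x ≤ d - 1) : d - 1 ≤ x * (d - x) := by
  nlinarith

noncomputable def spinAmp (d : ℕ) (lam : Fin d → ℝ) (k : ℕ) : ℝ :=
  √(if h : k < d then lam ⟨k, h⟩ else 0)

lemma mul_sum_sq_sub_spinAmp_le_spinVarSum (d : ℕ) (lam : Fin d → ℝ) :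
    ((d : ℝ) - 1) * ∑ k ∈ range (d - 1), (spinAmp d lam k - spinAmp d lam (k + 1)) ^ 2
      ≤ spinVarSum d lam := by
  rw [mul_sum]
  refine sum_le_sum fun k hk => mul_le_mul_of_nonneg_right (sub_one_le_mul_sub ?_ ?_) (sq_nonneg _)
  · linarith [k.cast_nonneg (α := ℝ)]
  · have : k + 2 ≤ d := by rw [mem_range] at hk; omega
    have : (k : ℝ) + 2 ≤ d := by exact_mod_cast this
    linarith

lemma mul_sq_sub_spinAmp_le {d r p q : ℕ} (lam : Fin d → ℝ) (hpq : p ≤ q) (hqp : q ≤ p + r)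
    (hq : q < d) :
    ((d : ℝ) - 1) * (spinAmp d lam p - spinAmp d lam q) ^ 2 ≤ r * spinVarSum d lam := by
  set s := spinAmp d lam
  have hd : (0 : ℝ) ≤ d - 1 := sub_nonneg.mpr (by exact_mod_cast (by omega : 1 ≤ d))
  have hsub : Ico p q ⊆ range (d - 1) := fun k hk => by
    rw [mem_Ico] at hk; rw [mem_range]; omega
  have hqpr : ((q - p : ℕ) : ℝ) ≤ r := by exact_mod_cast (by omega : q - p ≤ r)
  calc ((d : ℝ) - 1) * (s p - s q) ^ 2
      ≤ (d - 1) * ((q - p : ℕ) * ∑ k ∈ Ico p q, (s k - s (k + 1)) ^ 2) := by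
        gcongr; exact sq_sub_le_mul_sum_sq_sub s hpq
    _ ≤ (d - 1) * (r * ∑ k ∈ range (d - 1), (s k - s (k + 1)) ^ 2) := by
        gcongr
    _ = r * ((d - 1) * ∑ k ∈ range (d - 1), (s k - s (k + 1)) ^ 2) := by ring
    _ ≤ r * spinVarSum d lam := by
        gcongr; exact mul_sum_sq_sub_spinAmp_le_spinVarSum d lam

lemma div_sq_le_spinVarSum {d r : ℕ} (hr : 0 < r) (hrd : r < d) {lam : Fin d → ℝ}
    (hpos : ∀ k, 0 ≤ lam k) (hsum : ∑ k, lam k = 1)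
    (hcard : #(univ.filter fun k => lam k ≠ 0) ≤ r) :
    ((d : ℝ) - 1) / (r : ℝ) ^ 2 ≤ spinVarSum d lam := by
  obtain ⟨m, hm⟩ := exists_inv_le_of_sum_eq_one hsum hcard
  obtain ⟨z, hz, hzm, hmz⟩ := exists_eq_zero_near hrd hcard m
  have hd : (0 : ℝ) ≤ d - 1 := sub_nonneg.mpr (by exact_mod_cast (by omega : 1 ≤ d))
  have hgap : (spinAmp d lam m - spinAmp d lam z) ^ 2 = lam m := by
    simp [spinAmp, hz, Real.sq_sqrt (hpos m)]
  have hpath : ((d : ℝ) - 1) * lam m ≤ r * spinVarSum d lam := by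
    rcases le_total (m : ℕ) z with h | h
    · simpa [hgap] using mul_sq_sub_spinAmp_le lam h hzm z.isLt
    · simpa [← hgap, sub_sq_comm _ (spinAmp d lam m)] using mul_sq_sub_spinAmp_le lam h hmz m.isLt
  calc ((d : ℝ) - 1) / (r : ℝ) ^ 2 = (d - 1) * (r : ℝ)⁻¹ / r := by ring
    _ ≤ (d - 1) * lam m / r := by gcongr
    _ ≤ spinVarSum d lam := by rw [div_le_iff₀ (by exact_mod_cast hr)]; linarith

theorem Bspin_lower_bound_simple_general
    (d r : ℕ) (hr : 1 ≤ r) (hrd : r < d) :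
    ((d : ℝ) - 1) / (r : ℝ) ^ 2 ≤ Bspin d r := by
  have hd : 0 < d := by omega
  refine le_csInf ⟨_, Pi.single ⟨0, hd⟩ 1, fun k => by by_cases h : k = ⟨0, hd⟩ <;> simp [h],
    by simp, by simpa [Pi.single_apply, filter_eq'] using hr, rfl⟩ ?_
  rintro _ ⟨lam, hpos, hsum, hcard, rfl⟩
  exact div_sq_le_spinVarSum hr hrd hpos hsum hcard

/-- B_{j,r} ≥ 2j/r², where 2j = d - 1. -/
theorem Bspin_lower_bound_simple
    (d r : ℕ) (hd : 2 ≤ d) (hr : 1 ≤ r) (hrd : r < d) :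
    ((d : ℝ) - 1) / (r : ℝ) ^ 2 ≤ Bspin d r :=
  Bspin_lower_bound_simple_general d r hr hrd
end
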